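/- Let A = (Q, Σ, δ, s, F) be a DFA recognizing language L, with A_min its minimal DFA, and suppose width^D(L) = ent(A_min) (the entanglement characterization). If there exist a nonempty string γ and 2p pairwise distinct states u₁, …, u_{2p} of A_min with δ(u_i, γ) = u_i for all i ∈ [2p], then width^D(L) ≥ p. -/

import Mathlib

/-! Every finite string `α` lies strictly on one side of `γ^ω` in the co-lex order. Pick
strings `α_i` reaching the `2p` states `u_i`; at least `p` of them lie on the same side of
`γ^ω`, say below it. Cycling through those, the strings `α_i γ^{Nt}` (with `N` exceeding all
`|α_i|`) form a co-lex increasing sequence, since from the right they agree with `γ^ω`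
beyond the length of `α_i`; and each of them still reaches `u_i` because `γ` loops on `u_i`.
So these `p` states are entangled. -/

/-- Co-lexicographic order on finite strings: lexicographic order on reverses. -/
def ColexList {Sig : Type*} [LinearOrder Sig] (a b : List Sig) : Prop :=
  List.Lex (· < ·) a.reverse b.reverse

/-- Reflexive co-lexicographic order. -/
def ColexLe {Sig : Type*} [LinearOrder Sig] (a b : List Sig) : Prop :=
  a = b ∨ ColexList a b

/-- A finite or left-infinite string, represented by its sequence of characters read
from the right end (`none` signals that the string is exhausted). -/
def CStr (Sig : Type*) := ℕ → Option Sig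

/-- The representation of a finite string as a `CStr`. -/
def toCStr {Sig : Type*} (a : List Sig) : CStr Sig := fun i => a.reverse[i]?

/-- The left-infinite string `γ^ω = ⋯γγγ` (for nonempty `γ`) as a `CStr`. -/
def omegaCStr {Sig : Type*} (γ : List Sig) : CStr Sig :=
  fun i => γ.reverse[i % γ.length]?

/-- Strict co-lexicographic order on finite or left-infinite strings: reading from the
right, at the first position where the two strings differ, either the first string is
exhausted or its character is smaller. -/
def cstrLt {Sig : Type*} [LinearOrder Sig] (s t : CStr Sig) : Prop :=
  ∃ j, (∀ i, i < j → s i = t i) ∧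
    ((s j = none ∧ t j ≠ none) ∨ ∃ a b, s j = some a ∧ t j = some b ∧ a < b)

/-- Non-strict co-lexicographic order on finite or left-infinite strings. -/
def cstrLe {Sig : Type*} [LinearOrder Sig] (s t : CStr Sig) : Prop :=
  s = t ∨ cstrLt s t

/-- `w` is a co-lexicographic lower bound of the set `A` of finite strings. -/
def IsColexLB {Sig : Type*} [LinearOrder Sig] (w : CStr Sig) (A : Set (List Sig)) : Prop :=
  ∀ a ∈ A, cstrLe w (toCStr a)

/-- `w` is a co-lexicographic upper bound of the set `A` of finite strings. -/
def IsColexUB {Sig : Type*} [LinearOrder Sig] (w : CStr Sig) (A : Set (List Sig)) : Prop :=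
  ∀ a ∈ A, cstrLe (toCStr a) w

/-- `w` is the co-lexicographic infimum of the set `A` of finite strings. -/
def IsColexInf {Sig : Type*} [LinearOrder Sig] (w : CStr Sig) (A : Set (List Sig)) : Prop :=
  IsColexLB w A ∧ ∀ w', IsColexLB w' A → cstrLe w' w

/-- `w` is the co-lexicographic supremum of the set `A` of finite strings. -/
def IsColexSup {Sig : Type*} [LinearOrder Sig] (w : CStr Sig) (A : Set (List Sig)) : Prop :=
  IsColexUB w A ∧ ∀ w', IsColexUB w' A → cstrLe w w'

/-- The extension of a (total) DFA transition function to strings. -/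
def deltaStar {Q Sig : Type*} (δ : Q → Sig → Q) (q : Q) (a : List Sig) : Q :=
  a.foldl δ q

/-- `Ireach δ s u` is the set `I_u` of strings leading from the source `s` to `u`. -/
def Ireach {Q Sig : Type*} (δ : Q → Sig → Q) (s u : Q) : Set (List Sig) :=
  {a | deltaStar δ s a = u}

/-- Membership of a finite string in the open co-lex interval `(lo, hi)`. -/
def inOpenInterval {Sig : Type*} [LinearOrder Sig] (lo hi : CStr Sig) (a : List Sig) : Prop :=
  cstrLt lo (toCStr a) ∧ cstrLt (toCStr a) hi

/-- A set `S` of states is entangled: there is a co-lexicographically monotone sequence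
of strings hitting every state of `S` infinitely often. -/
def Entangled {Q Sig : Type*} [LinearOrder Sig] (δ : Q → Sig → Q) (s : Q) (S : Set Q) : Prop :=
  ∃ a : ℕ → List Sig,
    ((∀ t t', t ≤ t' → ColexLe (a t) (a t')) ∨ (∀ t t', t ≤ t' → ColexLe (a t') (a t))) ∧
    ∀ u ∈ S, ∀ t, ∃ t', t ≤ t' ∧ deltaStar δ s (a t') = u

def strPow {Sig : Type*} (γ : List Sig) (k : ℕ) : List Sig := (List.replicate k γ).flatten

section Strings

variable {Q Sig : Type*}

theorem strPow_add (γ : List Sig) (a b : ℕ) : strPow γ (a + b) = strPow γ a ++ strPow γ b := by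
  simp only [strPow, List.replicate_add, List.flatten_append]

theorem strPow_one (γ : List Sig) : strPow γ 1 = γ := by
  simp [strPow]

theorem reverse_strPow (γ : List Sig) (k : ℕ) : (strPow γ k).reverse = strPow γ.reverse k := by
  simp [strPow, List.reverse_flatten, List.map_replicate]

theorem length_strPow (γ : List Sig) (k : ℕ) : (strPow γ k).length = k * γ.length := by
  simp [strPow]

theorem getElem?_strPow (γ : List Sig) {k i : ℕ} (hi : i < k * γ.length) :
    (strPow γ k)[i]? = γ[i % γ.length]? := by
  induction k generalizing i with
  | zero => simp at hi
  | succ k ih =>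
    rw [Nat.succ_mul] at hi
    rw [add_comm, strPow_add, strPow_one]
    by_cases h : i < γ.length
    · rw [List.getElem?_append_left h, Nat.mod_eq_of_lt h]
    · rw [List.getElem?_append_right (by omega), ih (by omega), ← Nat.mod_eq_sub_mod (by omega)]

theorem toCStr_append_strPow (β γ : List Sig) {k i : ℕ} (hi : i < k * γ.length) :
    toCStr (β ++ strPow γ k) i = omegaCStr γ i := by
  have hi' : i < (strPow γ k).reverse.length := by
    rwa [List.length_reverse, length_strPow]
  simp only [toCStr, omegaCStr, List.reverse_append]
  rw [List.getElem?_append_left hi', reverse_strPow,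
    getElem?_strPow _ (by rwa [List.length_reverse]), List.length_reverse]

theorem toCStr_length_ne_omegaCStr {γ : List Sig} (hγ : γ ≠ []) (α : List Sig) :
    toCStr α α.length ≠ omegaCStr γ α.length := by
  have h : α.length % γ.length < γ.reverse.length := by
    simpa using Nat.mod_lt _ (List.length_pos_iff.mpr hγ)
  simp [toCStr, omegaCStr, List.getElem?_eq_getElem h]

theorem length_lt_mul_length {γ α : List Sig} (hγ : γ ≠ []) {N d : ℕ} (hα : α.length < N)
    (hd : 0 < d) : α.length < N * d * γ.length := by
  have := List.length_pos_iff.mpr hγ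
  calc α.length < N := hα
    _ ≤ N * d := Nat.le_mul_of_pos_right N hd
    _ ≤ N * d * γ.length := Nat.le_mul_of_pos_right _ this

theorem deltaStar_append (δ : Q → Sig → Q) (q : Q) (x y : List Sig) :
    deltaStar δ q (x ++ y) = deltaStar δ (deltaStar δ q x) y :=
  List.foldl_append ..

theorem deltaStar_strPow {δ : Q → Sig → Q} {q : Q} {γ : List Sig} (h : deltaStar δ q γ = q)
    (k : ℕ) : deltaStar δ q (strPow γ k) = q := by
  induction k with
  | zero => rfl
  | succ k ih => rw [strPow_add, deltaStar_append, ih, strPow_one, h]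

end Strings

section Colex

variable {Sig : Type*} [LinearOrder Sig]

theorem lex_of_getElem? {x y : List Sig} {j : ℕ} (hagree : ∀ i < j, x[i]? = y[i]?)
    (hj : (x[j]? = none ∧ y[j]? ≠ none) ∨ ∃ a b, x[j]? = some a ∧ y[j]? = some b ∧ a < b) :
    List.Lex (· < ·) x y := by
  induction x generalizing y j with
  | nil => cases y <;> simp_all
  | cons a x ih =>
    cases y with
    | nil => simp_all
    | cons b y =>
      cases j with
      | zero => simp_all [List.cons_lt_cons_iff]
      | succ j =>
        obtain rfl : a = b := by simpa using hagree 0 j.succ_pos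
        exact .cons <| ih (j := j) (fun i hi => by simpa using hagree (i + 1) (by omega))
          (by simpa using hj)

theorem colexList_of_cstrLt {a b : List Sig} (h : cstrLt (toCStr a) (toCStr b)) :
    ColexList a b :=
  let ⟨_, hagree, hj⟩ := h
  lex_of_getElem? hagree hj

theorem ColexList.append_right {a b : List Sig} (h : ColexList a b) (c : List Sig) :
    ColexList (a ++ c) (b ++ c) := by
  simpa only [ColexList, List.reverse_append] using List.Lex.append_left _ h c.reverse

/-- The position witnessing `cstrLt s t` is the first difference of `s` and `t`, hence at
most `n`. -/
theorem cstrLt_of_eqOn_le {s t s' t' : CStr Sig} {n : ℕ} (h : cstrLt s t) (hn : s n ≠ t n)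
    (hs : ∀ i ≤ n, s' i = s i) (ht : ∀ i ≤ n, t' i = t i) : cstrLt s' t' := by
  obtain ⟨j, hagree, hj⟩ := h
  have hjn : j ≤ n := by
    by_contra! hnj
    exact hn (hagree n hnj)
  refine ⟨j, fun i hi => by rw [hs i (by omega), ht i (by omega), hagree i hi], ?_⟩
  rwa [hs j hjn, ht j hjn]

theorem cstrLt_or_cstrLt_of_ne {s t : CStr Sig} (h : s ≠ t) : cstrLt s t ∨ cstrLt t s := by
  classical
  have hex : ∃ j, s j ≠ t j := by
    by_contra! hst
    exact h (funext hst)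
  have hagree : ∀ i < Nat.find hex, s i = t i := fun i hi => not_not.mp (Nat.find_min hex hi)
  have hne := Nat.find_spec hex
  cases hs : s (Nat.find hex) with
  | none => exact .inl ⟨_, hagree, .inl ⟨hs, hs ▸ hne.symm⟩⟩
  | some a =>
    cases ht : t (Nat.find hex) with
    | none => exact .inr ⟨_, fun i hi => (hagree i hi).symm, .inl ⟨ht, by simp [hs]⟩⟩
    | some b =>
      rcases lt_trichotomy a b with hab | rfl | hab
      · exact .inl ⟨_, hagree, .inr ⟨a, b, hs, ht, hab⟩⟩
      · exact absurd (hs.trans ht.symm) hne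
      · exact .inr ⟨_, fun i hi => (hagree i hi).symm, .inr ⟨b, a, ht, hs, hab⟩⟩

theorem toCStr_lt_omegaCStr_or {γ : List Sig} (hγ : γ ≠ []) (α : List Sig) :
    cstrLt (toCStr α) (omegaCStr γ) ∨ cstrLt (omegaCStr γ) (toCStr α) :=
  cstrLt_or_cstrLt_of_ne fun h => toCStr_length_ne_omegaCStr hγ α (congrFun h _)

theorem colexList_append_strPow_of_lt_omega {γ α : List Sig} (hγ : γ ≠ [])
    (h : cstrLt (toCStr α) (omegaCStr γ)) {k : ℕ} (hk : α.length < k * γ.length)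
    (β : List Sig) : ColexList α (β ++ strPow γ k) :=
  colexList_of_cstrLt <| cstrLt_of_eqOn_le h (toCStr_length_ne_omegaCStr hγ α)
    (fun _ _ => rfl) (fun _ hi => toCStr_append_strPow β γ (by omega))

theorem colexList_append_strPow_of_omega_lt {γ α : List Sig} (hγ : γ ≠ [])
    (h : cstrLt (omegaCStr γ) (toCStr α)) {k : ℕ} (hk : α.length < k * γ.length)
    (β : List Sig) : ColexList (β ++ strPow γ k) α :=
  colexList_of_cstrLt <| cstrLt_of_eqOn_le h (toCStr_length_ne_omegaCStr hγ α).symm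
    (fun _ hi => toCStr_append_strPow β γ (by omega)) (fun _ _ => rfl)

theorem colexLe_append_strPow_of_lt_omega {γ : List Sig} (hγ : γ ≠ []) {f : ℕ → List Sig}
    {N : ℕ} (hN : ∀ t, (f t).length < N) (hf : ∀ t, cstrLt (toCStr (f t)) (omegaCStr γ))
    {t t' : ℕ} (htt' : t ≤ t') :
    ColexLe (f t ++ strPow γ (N * t)) (f t' ++ strPow γ (N * t')) := by
  obtain ⟨d, rfl⟩ := Nat.exists_eq_add_of_le htt'
  rcases d.eq_zero_or_pos with rfl | hd
  · exact .inl rfl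
  rw [show N * (t + d) = N * d + N * t by ring, strPow_add, ← List.append_assoc]
  exact .inr <| (colexList_append_strPow_of_lt_omega hγ (hf t)
    (length_lt_mul_length hγ (hN t) hd) _).append_right _

theorem colexLe_append_strPow_of_omega_lt {γ : List Sig} (hγ : γ ≠ []) {f : ℕ → List Sig}
    {N : ℕ} (hN : ∀ t, (f t).length < N) (hf : ∀ t, cstrLt (omegaCStr γ) (toCStr (f t)))
    {t t' : ℕ} (htt' : t ≤ t') :
    ColexLe (f t' ++ strPow γ (N * t')) (f t ++ strPow γ (N * t)) := by
  obtain ⟨d, rfl⟩ := Nat.exists_eq_add_of_le htt'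
  rcases d.eq_zero_or_pos with rfl | hd
  · exact .inl rfl
  rw [show N * (t + d) = N * d + N * t by ring, strPow_add, ← List.append_assoc]
  exact .inr <| (colexList_append_strPow_of_omega_lt hγ (hf t)
    (length_lt_mul_length hγ (hN t) hd) _).append_right _

end Colex

theorem entangled_range_of_cycles {Q Sig ι : Type*} [LinearOrder Sig] [Fintype ι]
    {δ : Q → Sig → Q} {s : Q} {γ : List Sig} (hγ : γ ≠ []) (q : ι → Q) (β : ι → List Sig)
    (hβ : ∀ i, deltaStar δ s (β i) = q i) (hcyc : ∀ i, deltaStar δ (q i) γ = q i)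
    (hside : (∀ i, cstrLt (toCStr (β i)) (omegaCStr γ)) ∨
      (∀ i, cstrLt (omegaCStr γ) (toCStr (β i)))) :
    Entangled δ s (Set.range q) := by
  cases isEmpty_or_nonempty ι
  · exact ⟨fun _ => [], .inl fun _ _ _ => .inl rfl, by simp⟩
  set k := Fintype.card ι
  have hk : 0 < k := Fintype.card_pos
  let e := Fintype.equivFin ι
  let f : ℕ → List Sig := fun t => β (e.symm ⟨t % k, Nat.mod_lt t hk⟩)
  obtain ⟨N, hN⟩ : ∃ N, ∀ i, (β i).length < N :=
    ⟨∑ i, (β i).length + 1, fun i => Nat.lt_succ_of_le <| Finset.single_le_sum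
      (f := fun i => (β i).length) (fun _ _ => Nat.zero_le _) (Finset.mem_univ i)⟩
  refine ⟨fun t => f t ++ strPow γ (N * t), ?_, ?_⟩
  · exact hside.imp
      (fun h _ _ => colexLe_append_strPow_of_lt_omega hγ (f := f) (fun _ => hN _) (fun _ => h _))
      (fun h _ _ => colexLe_append_strPow_of_omega_lt hγ (f := f) (fun _ => hN _) (fun _ => h _))
  · rintro _ ⟨i, rfl⟩ t
    have hf : f (k * t + e i) = β i := by
      suffices (⟨(k * t + e i) % k, Nat.mod_lt _ hk⟩ : Fin k) = e i by
        simp only [f, this, Equiv.symm_apply_apply]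
      exact Fin.ext (by simpa using Nat.mod_eq_of_lt (e i).isLt)
    refine ⟨k * t + e i, by nlinarith, ?_⟩
    dsimp only
    rw [hf, deltaStar_append, hβ, deltaStar_strPow (hcyc i)]

theorem Finset.exists_subset_card_eq_forall_or_forall_not {α : Type*} (P : α → Prop)
    [DecidablePred P] {s : Finset α} {p : ℕ} (h : 2 * p ≤ s.card) :
    ∃ t ⊆ s, t.card = p ∧ ((∀ i ∈ t, P i) ∨ ∀ i ∈ t, ¬P i) := by
  have hsplit := Finset.card_filter_add_card_filter_not (s := s) P
  rcases le_or_gt p (s.filter P).card with hP | hP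
  · obtain ⟨t, hts, htp⟩ := Finset.exists_subset_card_eq hP
    exact ⟨t, hts.trans (s.filter_subset _), htp, .inl fun _ hi => (Finset.mem_filter.mp (hts hi)).2⟩
  · obtain ⟨t, hts, htp⟩ :=
      Finset.exists_subset_card_eq (s := s.filter (¬P ·)) (n := p) (by omega)
    exact ⟨t, hts.trans (s.filter_subset _), htp, .inr fun _ hi => (Finset.mem_filter.mp (hts hi)).2⟩

theorem stmt_13_general {Q Sig : Type*} [LinearOrder Sig]
    (δ : Q → Sig → Q) (s : Q) (widthD ent : ℕ)
    (hacc : ∀ u : Q, ∃ a, deltaStar δ s a = u)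
    (hent : IsGreatest {k | ∃ S : Finset Q, S.card = k ∧ Entangled δ s ↑S} ent)
    (hwd : widthD = ent)
    (p : ℕ) (γ : List Sig) (hγ : γ ≠ [])
    (u : Fin (2 * p) → Q) (hinj : Function.Injective u)
    (hcyc : ∀ i, deltaStar δ (u i) γ = u i) :
    p ≤ widthD := by
  classical
  choose α hα using hacc
  obtain ⟨T, -, hTcard, hside⟩ := Finset.exists_subset_card_eq_forall_or_forall_not
    (fun i => cstrLt (toCStr (α (u i))) (omegaCStr γ)) (s := Finset.univ) (p := p) (by simp)
  have hT : Entangled δ s ↑(T.image u) := by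
    rw [Finset.coe_image, Set.image_eq_range]
    refine entangled_range_of_cycles hγ (fun i : T => u i) (fun i => α (u i)) (fun _ => hα _)
      (fun _ => hcyc _) (hside.imp (fun h i => h i i.2)
        fun h i => (toCStr_lt_omegaCStr_or hγ _).resolve_left (h i i.2))
  exact hwd ▸ hent.2 ⟨_, by rw [Finset.card_image_of_injective T hinj, hTcard], hT⟩

/-- Sufficiency of `2p` equally-labeled cycles: if the minimal DFA of `L` (with all
states reachable) contains `2p` pairwise distinct states each carrying a cycle
labeled by the same nonempty string `γ`, and `width^D(L) = ent(A_min)`, then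
`width^D(L) ≥ p`. Here `ent` is characterized as the greatest cardinality of an
entangled set of states. -/
theorem stmt_13 {Q Sig : Type*} [Fintype Q] [LinearOrder Sig]
    (δ : Q → Sig → Q) (s : Q) (widthD ent : ℕ)
    (hacc : ∀ u : Q, ∃ a, deltaStar δ s a = u)
    (hent : IsGreatest {k | ∃ S : Finset Q, S.card = k ∧ Entangled δ s ↑S} ent)
    (hwd : widthD = ent)
    (p : ℕ) (γ : List Sig) (hγ : γ ≠ [])
    (u : Fin (2 * p) → Q) (hinj : Function.Injective u)
    (hcyc : ∀ i, deltaStar δ (u i) γ = u i) :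
    p ≤ widthD :=
  stmt_13_general δ s widthD ent hacc hent hwd p γ hγ u hinj hcyc
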